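/- Let 0 ≤ a < b ≤ 1, let f : ℝ → ℝ be a nonnegative integrable function with ∫_a^b f(ξ) dξ = 1, and let F(x) = ∫_a^x f(ξ) dξ. Let T ∈ ℕ, T ≥ 1, let u_1,…,u_T ∈ (a,b), v ∈ (a,b), and let ω_1 ≥ ω_2 ≥ … ≥ ω_T ≥ 0. Define m_1 = a and m_j = max{a, u_1,…,u_{j−1}} for j ≥ 2. Then ∫_a^b ( 1 − max_{j=1,…,T}( ω_j 𝟙_{u_j > ξ} ) ) ( 1 − 𝟙_{v > ξ} ) f(ξ) dξ = 1 − F(v) − Σ_{j : u_j > m_j} ω_j ( F(u_j) − F(m_j) + F(min{m_j, v}) − F(min{u_j, v}) ). -/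

import Mathlib

/-!
For `a ≤ ξ`, the condition `m j ≤ ξ < u j` says that `j` is the first index with `ξ < u j`. So
the power intervals `[m j, u j)` are disjoint, and as `ω` is non-increasing and nonnegative,
`max_j ω j 𝟙(ξ < u j) = ∑_j ω j 𝟙(ξ ∈ [m j, u j))`. Multiplying by `𝟙(v ≤ ξ)` turns
`𝟙(ξ ∈ [m j, u j))` into `𝟙(ξ < max (u j) v) - 𝟙(ξ < max (m j) v)`, so the integral is a linear
combination of values of `F`, and `F (max x v) + F (min x v) = F x + F v` gives the stated form.
-/

open MeasureTheory Set

protected theorem IntervalIntegrable.indicator {f : ℝ → ℝ} {μ : Measure ℝ} {a b : ℝ} {s : Set ℝ}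
    (hf : IntervalIntegrable f μ a b) (hs : MeasurableSet s) :
    IntervalIntegrable (s.indicator f) μ a b :=
  ⟨hf.1.indicator hs, hf.2.indicator hs⟩

theorem intervalIntegral.integral_indicator_Iio {f : ℝ → ℝ} {a b c : ℝ} (hc : c ∈ Icc a b) :
    ∫ x in a..b, (Iio c).indicator f x = ∫ x in a..c, f x := by
  rw [← intervalIntegral.integral_indicator hc]
  exact intervalIntegral.integral_congr_ae
    ((indicator_ae_eq_of_ae_eq_set Iio_ae_eq_Iic).mono fun x hx _ => hx)

theorem apply_max_add_apply_min {α β : Type*} [LinearOrder α] [AddCommMagma β] (φ : α → β)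
    (x y : α) :
    φ (max x y) + φ (min x y) = φ x + φ y := by
  rcases le_total x y with h | h
  · rw [max_eq_right h, min_eq_left h, add_comm]
  · rw [max_eq_left h, min_eq_right h]

theorem ite_and_mul_one_sub_ite {c d v ξ : ℝ} (hcd : c ≤ d) :
    ((if c ≤ ξ ∧ ξ < d then 1 else 0) * (1 - if ξ < v then 1 else 0) : ℝ)
      = (if ξ < max d v then 1 else 0) - (if ξ < max c v then 1 else 0) := by
  split_ifs <;> grind

theorem sup'_mul_ite_eq_sum_mul_ite_first {T : ℕ} (hT : 1 ≤ T) {ω : ℕ → ℝ}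
    (hω_anti : AntitoneOn ω (Set.Icc 1 T)) (hω_nonneg : ∀ j ∈ Finset.Icc 1 T, 0 ≤ ω j)
    (p : ℕ → Prop) [DecidablePred p] :
    (Finset.Icc 1 T).sup' (Finset.nonempty_Icc.mpr hT) (fun j => ω j * if p j then 1 else 0)
      = ∑ j ∈ Finset.Icc 1 T,
          ω j * if p j ∧ ∀ k : ℕ, 1 ≤ k → k < j → ¬ p k then (1 : ℝ) else 0 := by
  by_cases hex : ∃ j ∈ Finset.Icc 1 T, p j
  · have hQ : ((Finset.Icc 1 T).filter p).Nonempty := by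
      simpa [Finset.filter_nonempty_iff] using hex
    set j₀ := ((Finset.Icc 1 T).filter p).min' hQ
    obtain ⟨hj₀, hpj₀⟩ := Finset.mem_filter.mp (Finset.min'_mem _ hQ)
    have hmin : ∀ k ∈ Finset.Icc 1 T, p k → j₀ ≤ k := fun k hk hpk =>
      Finset.min'_le _ k (Finset.mem_filter.mpr ⟨hk, hpk⟩)
    have hfirst : ∀ j ∈ Finset.Icc 1 T, (p j ∧ ∀ k : ℕ, 1 ≤ k → k < j → ¬ p k) ↔ j = j₀ := by
      intro j hj
      rw [Finset.mem_Icc] at hj hj₀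
      constructor
      · rintro ⟨hpj, hbefore⟩
        exact le_antisymm (not_lt.mp fun hlt => hbefore j₀ hj₀.1 hlt hpj₀)
          (hmin j (Finset.mem_Icc.mpr hj) hpj)
      · rintro rfl
        exact ⟨hpj₀, fun k hk hkj hpk =>
          (hmin k (Finset.mem_Icc.mpr ⟨hk, by omega⟩) hpk).not_gt hkj⟩
    calc _ = ω j₀ := by
          refine le_antisymm (Finset.sup'_le _ _ fun j hj => ?_) ?_
          · split_ifs with hpj
            · simpa using hω_anti (Finset.mem_Icc.mp hj₀) (Finset.mem_Icc.mp hj) (hmin j hj hpj)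
            · simpa using hω_nonneg j₀ hj₀
          · simpa only [hpj₀, if_true, mul_one] using
              Finset.le_sup' (fun j => ω j * if p j then (1 : ℝ) else 0) hj₀
      _ = _ := by
          rw [Finset.sum_congr rfl fun j hj => by rw [if_congr (hfirst j hj) rfl rfl]]
          simp only [mul_ite, mul_one, mul_zero]
          rw [Finset.sum_ite_eq', if_pos hj₀]
  · push Not at hex
    rw [Finset.sum_eq_zero fun j hj => by simp [hex j hj],
      Finset.sup'_congr _ rfl fun j hj => show _ = (0 : ℝ) by simp [hex j hj], Finset.sup'_const]

theorem sup'_mul_ite_lt_eq_sum_mul_ite_Ico {a ξ : ℝ} (hξ : a ≤ ξ) {T : ℕ} (hT : 1 ≤ T)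
    {ω : ℕ → ℝ} (hω_anti : AntitoneOn ω (Set.Icc 1 T))
    (hω_nonneg : ∀ j ∈ Finset.Icc 1 T, 0 ≤ ω j)
    {u m : ℕ → ℝ} (hm : ∀ j, m j = (Finset.Icc 1 (j - 1)).fold max a u) :
    (Finset.Icc 1 T).sup' (Finset.nonempty_Icc.mpr hT) (fun j => ω j * if ξ < u j then 1 else 0)
      = ∑ j ∈ (Finset.Icc 1 T).filter (fun j => m j < u j),
          ω j * if m j ≤ ξ ∧ ξ < u j then 1 else 0 := by
  rw [sup'_mul_ite_eq_sum_mul_ite_first hT hω_anti hω_nonneg, Finset.sum_filter_of_ne]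
  · refine Finset.sum_congr rfl fun j _ => ?_
    have hmξ : m j ≤ ξ ↔ ∀ k : ℕ, 1 ≤ k → k < j → ¬ ξ < u k := by
      simp only [hm, Finset.fold_max_le, hξ, true_and, Finset.mem_Icc, not_lt]
      exact forall_congr' fun k => ⟨fun h hk hkj => h ⟨hk, by omega⟩, fun h hk => h hk.1 (by omega)⟩
    exact congrArg (ω j * ·) (if_congr (by rw [hmξ, and_comm]) rfl rfl)
  · intro j _ hj
    split_ifs at hj with h
    · exact h.1.trans_lt h.2
    · simp at hj

theorem one_sub_sup'_mul_one_sub_ite_mul_eq {a ξ v : ℝ} (hξ : a ≤ ξ) {T : ℕ} (hT : 1 ≤ T)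
    {ω : ℕ → ℝ} (hω_anti : AntitoneOn ω (Set.Icc 1 T))
    (hω_nonneg : ∀ j ∈ Finset.Icc 1 T, 0 ≤ ω j)
    {u m : ℕ → ℝ} (hm : ∀ j, m j = (Finset.Icc 1 (j - 1)).fold max a u) (f : ℝ → ℝ) :
    (1 - (Finset.Icc 1 T).sup' (Finset.nonempty_Icc.mpr hT)
        (fun j => ω j * if ξ < u j then 1 else 0)) * (1 - if ξ < v then 1 else 0) * f ξ
      = f ξ - (Iio v).indicator f ξ - ∑ j ∈ (Finset.Icc 1 T).filter (fun j => m j < u j),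
          ω j * ((Iio (max (u j) v)).indicator f ξ - (Iio (max (m j) v)).indicator f ξ) := by
  have hind : ∀ c, (Iio c).indicator f ξ = (if ξ < c then 1 else 0) * f ξ := fun c => by
    simp [indicator_apply]
  have hsum : (∑ j ∈ (Finset.Icc 1 T).filter (fun j => m j < u j),
      ω j * if m j ≤ ξ ∧ ξ < u j then 1 else 0) * (1 - if ξ < v then 1 else 0)
      = ∑ j ∈ (Finset.Icc 1 T).filter (fun j => m j < u j),
          ω j * ((if ξ < max (u j) v then 1 else 0) - (if ξ < max (m j) v then 1 else 0)) := by
    rw [Finset.sum_mul]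
    refine Finset.sum_congr rfl fun j hj => ?_
    rw [mul_assoc, ite_and_mul_one_sub_ite (Finset.mem_filter.mp hj).2.le]
  rw [sup'_mul_ite_lt_eq_sum_mul_ite_Ico hξ hT hω_anti hω_nonneg hm, sub_mul, one_mul, hsum]
  simp only [hind, ← sub_mul, ← mul_assoc, ← Finset.sum_mul]
  ring

theorem intervalIntegral.integral_sub_indicator_Iio_sub_sum {f : ℝ → ℝ} {a b v : ℝ}
    (hf : IntervalIntegrable f volume a b) (hv : v ∈ Icc a b) {ι : Type*} (s : Finset ι)
    (w c d : ι → ℝ) (hc : ∀ i ∈ s, c i ∈ Icc a b) (hd : ∀ i ∈ s, d i ∈ Icc a b) :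
    ∫ x in a..b, (f x - (Iio v).indicator f x
        - ∑ i ∈ s, w i * ((Iio (d i)).indicator f x - (Iio (c i)).indicator f x))
      = (∫ x in a..b, f x) - (∫ x in a..v, f x)
        - ∑ i ∈ s, w i * ((∫ x in a..d i, f x) - ∫ x in a..c i, f x) := by
  have hI : ∀ c, IntervalIntegrable ((Iio c).indicator f) volume a b := fun c =>
    hf.indicator measurableSet_Iio
  have hterm : ∀ i ∈ s, IntervalIntegrable
      (fun x => w i * ((Iio (d i)).indicator f x - (Iio (c i)).indicator f x)) volume a b :=
    fun i _ => ((hI _).sub (hI _)).const_mul _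
  have hsum : IntervalIntegrable (fun x => ∑ i ∈ s,
      w i * ((Iio (d i)).indicator f x - (Iio (c i)).indicator f x)) volume a b := by
    simpa only [Finset.sum_fn] using IntervalIntegrable.sum s hterm
  rw [integral_sub (hf.sub (hI v)) hsum, integral_sub hf (hI v), integral_finsetSum hterm,
    integral_indicator_Iio hv]
  refine congrArg _ (Finset.sum_congr rfl fun i hi => ?_)
  rw [integral_const_mul, integral_sub (hI _) (hI _), integral_indicator_Iio (hd i hi),
    integral_indicator_Iio (hc i hi)]

theorem stmt17_general (a b : ℝ) (hab : a < b)
    (f : ℝ → ℝ)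
    (hf_int : IntervalIntegrable f volume a b)
    (hf_one : (∫ ξ in a..b, f ξ) = 1)
    (F : ℝ → ℝ) (hF : ∀ x, F x = ∫ ξ in a..x, f ξ)
    (T : ℕ) (hT : 1 ≤ T)
    (u : ℕ → ℝ) (hu : ∀ j ∈ Finset.Icc 1 T, u j ∈ Set.Ioo a b)
    (v : ℝ) (hv : v ∈ Set.Ioo a b)
    (ω : ℕ → ℝ) (hω_nonneg : ∀ j ∈ Finset.Icc 1 T, 0 ≤ ω j)
    (hω_mono : ∀ j, 1 ≤ j → j + 1 ≤ T → ω (j + 1) ≤ ω j)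
    (m : ℕ → ℝ) (hm : ∀ j, m j = (Finset.Icc 1 (j - 1)).fold max a u) :
    (∫ ξ in a..b,
        (1 - (Finset.Icc 1 T).sup' (Finset.nonempty_Icc.mpr hT)
            (fun j => ω j * (if ξ < u j then (1 : ℝ) else 0))) *
          (1 - (if ξ < v then (1 : ℝ) else 0)) * f ξ)
      = 1 - F v - ∑ j ∈ (Finset.Icc 1 T).filter (fun j => m j < u j),
          ω j * (F (u j) - F (m j) + F (min (m j) v) - F (min (u j) v)) := by
  have hω_anti : AntitoneOn ω (Set.Icc 1 T) :=
    antitoneOn_of_add_one_le ordConnected_Icc fun j _ hj hj' => hω_mono j hj.1 hj'.2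
  have hmax_mem : ∀ x ≤ b, max x v ∈ Icc a b := fun x hx =>
    ⟨hv.1.le.trans (le_max_right _ _), max_le hx hv.2.le⟩
  have hS : ∀ j ∈ (Finset.Icc 1 T).filter (fun j => m j < u j), m j < u j ∧ u j < b :=
    fun j hj => ⟨(Finset.mem_filter.mp hj).2, (hu j (Finset.mem_filter.mp hj).1).2⟩
  rw [intervalIntegral.integral_congr fun ξ hξ => one_sub_sup'_mul_one_sub_ite_mul_eq
      (uIcc_of_le hab.le ▸ hξ).1 hT hω_anti hω_nonneg hm f,
    intervalIntegral.integral_sub_indicator_Iio_sub_sum hf_int ⟨hv.1.le, hv.2.le⟩ _ _ _ _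
      (fun j hj => hmax_mem _ ((hS j hj).1.trans (hS j hj).2).le)
      (fun j hj => hmax_mem _ (hS j hj).2.le),
    hf_one]
  simp only [← hF]
  refine congrArg _ (Finset.sum_congr rfl fun j _ => ?_)
  linear_combination ω j * (apply_max_add_apply_min F (u j) v - apply_max_add_apply_min F (m j) v)

/-- Per-sample integral identity for the value-weighted weight function with
`g = g_max`: with `m_j = max{a, u_1, …, u_{j-1}}`,
`∫_a^b (1 - max_j ω_j 𝟙_{u_j > ξ})(1 - 𝟙_{v > ξ}) f(ξ) dξ
= 1 - F(v) - ∑_{j : u_j > m_j} ω_j (F(u_j) - F(m_j) + F(min{m_j,v}) - F(min{u_j,v}))`. -/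
theorem stmt17 (a b : ℝ) (ha : 0 ≤ a) (hab : a < b) (hb : b ≤ 1)
    (f : ℝ → ℝ) (hf_nonneg : ∀ x, 0 ≤ f x)
    (hf_int : IntervalIntegrable f volume a b)
    (hf_one : (∫ ξ in a..b, f ξ) = 1)
    (F : ℝ → ℝ) (hF : ∀ x, F x = ∫ ξ in a..x, f ξ)
    (T : ℕ) (hT : 1 ≤ T)
    (u : ℕ → ℝ) (hu : ∀ j ∈ Finset.Icc 1 T, u j ∈ Set.Ioo a b)
    (v : ℝ) (hv : v ∈ Set.Ioo a b)
    (ω : ℕ → ℝ) (hω_nonneg : ∀ j ∈ Finset.Icc 1 T, 0 ≤ ω j)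
    (hω_mono : ∀ j, 1 ≤ j → j + 1 ≤ T → ω (j + 1) ≤ ω j)
    (m : ℕ → ℝ) (hm : ∀ j, m j = (Finset.Icc 1 (j - 1)).fold max a u) :
    (∫ ξ in a..b,
        (1 - (Finset.Icc 1 T).sup' (Finset.nonempty_Icc.mpr hT)
            (fun j => ω j * (if ξ < u j then (1 : ℝ) else 0))) *
          (1 - (if ξ < v then (1 : ℝ) else 0)) * f ξ)
      = 1 - F v - ∑ j ∈ (Finset.Icc 1 T).filter (fun j => m j < u j),
          ω j * (F (u j) - F (m j) + F (min (m j) v) - F (min (u j) v)) :=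
  stmt17_general a b hab f hf_int hf_one F hF T hT u hu v hv ω hω_nonneg hω_mono m hm
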